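/- arXiv:2006.01544 — 2 statements merged into one kernel-verified Lean document; each statement's English description precedes it below -/
import Mathlib

section
/- Let n ≥ 3, β ≥ 1, L > 0. Define G_{β,L}(x) = (β²/(2β−1))x^{2β−1} for 0 ≤ x ≤ L and G_{β,L}(x) = β²L^{2(β−1)}x − 2β²L^{2β−1}(β−1)/(2β−1) for x > L, and H_{β,L}(x) = ∫₀ˣ G_{β,L}(y)dy. Then for all x ≥ 0: (n/2)·H_{β,L}(x) − x·G_{β,L}(x) − ((n−2)/4)·φ_{β,L}(x)² ≤ 0, where φ_{β,L}(x) = x^β for x ≤ L and φ_{β,L}(x) = βL^{β−1}(x−L) + L^β for x > L. -/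
/-- Linearized power function: `x ^ β` for `x ≤ L`, linear extension beyond `L`. -/
noncomputable def phi (β L x : ℝ) : ℝ :=
  if x ≤ L then x ^ β else β * L ^ (β-1) * (x - L) + L ^ β

/-- `G_{β,L}(x) = ∫₀ˣ φ'(y)² dy`, in closed form. -/
noncomputable def Gfun (β L x : ℝ) : ℝ :=
  if x ≤ L then β^2/(2*β-1) * x ^ (2*β-1)
  else β^2 * L ^ (2*(β-1)) * x - 2*β^2 * L ^ (2*β-1) * (β-1)/(2*β-1)

/-- `H_{β,L}(x) = ∫₀ˣ G_{β,L}(y) dy`. -/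
noncomputable def Hfun (β L x : ℝ) : ℝ := ∫ y in (0:ℝ)..x, Gfun β L y

/-!
With `κ = n(β - 1) + (2β - 1)² + 1 > 0`, the expression equals
`-κ x^(2β) / (4(2β - 1))` on `[0, L]`, where `H`, `x G` and `φ²` are all multiples of
`x^(2β)`. Beyond `L`, writing `v = L^(β - 1)` and `t = x - L`, it equals
`-v² (2(2β - 1)β² t² + 2Lβκ t + L²κ) / (4(2β - 1))`, whose coefficients are all nonnegative.
-/

open Real

section

variable {a β L x : ℝ}

lemma rpow_two_mul_eq_sq (hL : 0 ≤ L) : L ^ (2 * a) = (L ^ a) ^ 2 := by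
  rw [mul_comm, ← rpow_mul_natCast hL]
  norm_num

lemma rpow_sub_one_mul_self (hL : L ≠ 0) : L ^ (a - 1) * L = L ^ a := by
  rw [← rpow_add_one hL, sub_add_cancel]

lemma rpow_two_mul_sub_one (hL : 0 < L) : L ^ (2 * a - 1) = (L ^ (a - 1)) ^ 2 * L := by
  rw [← rpow_two_mul_eq_sq hL.le, ← rpow_add_one hL.ne']
  ring_nf

lemma phi_of_ge (hL : 0 < L) (hx : L ≤ x) :
    phi β L x = L ^ (β - 1) * (β * (x - L) + L) := by
  have hpow := (rpow_sub_one_mul_self (a := β) hL.ne').symm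
  unfold phi
  split_ifs with h
  · rw [le_antisymm h hx, hpow]
    ring
  · rw [hpow]
    ring

lemma Gfun_affine_branch_eq (hL : 0 < L) (y : ℝ) :
    β ^ 2 * L ^ (2 * (β - 1)) * y - 2 * β ^ 2 * L ^ (2 * β - 1) * (β - 1) / (2 * β - 1) =
      β ^ 2 * (L ^ (β - 1)) ^ 2 * (y - 2 * (β - 1) / (2 * β - 1) * L) := by
  rw [rpow_two_mul_eq_sq hL.le, rpow_two_mul_sub_one hL]
  ring

lemma Gfun_power_branch_at_eq (hβ : 1 ≤ β) (hL : 0 < L) :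
    β ^ 2 / (2 * β - 1) * L ^ (2 * β - 1) =
      β ^ 2 * (L ^ (β - 1)) ^ 2 * (L - 2 * (β - 1) / (2 * β - 1) * L) := by
  have hglue : 1 - 2 * (β - 1) / (2 * β - 1) = 1 / (2 * β - 1) := by
    have hβ' : 2 * β - 1 ≠ 0 := by linarith
    field_simp
    ring
  rw [rpow_two_mul_sub_one hL]
  linear_combination -(β ^ 2 * (L ^ (β - 1)) ^ 2 * L) * hglue

lemma Gfun_of_ge (hβ : 1 ≤ β) (hL : 0 < L) (hx : L ≤ x) :
    Gfun β L x = β ^ 2 * (L ^ (β - 1)) ^ 2 * (x - 2 * (β - 1) / (2 * β - 1) * L) := by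
  unfold Gfun
  split_ifs with h
  · rw [le_antisymm h hx]
    exact Gfun_power_branch_at_eq hβ hL
  · exact Gfun_affine_branch_eq hL x

lemma continuous_Gfun (hβ : 1 ≤ β) (hL : 0 < L) : Continuous (Gfun β L) := by
  have hpow : Continuous fun y : ℝ => y ^ (2 * β - 1) := continuous_rpow_const (by linarith)
  refine Continuous.if_le (by fun_prop) (by fun_prop) continuous_id continuous_const ?_
  rintro y (rfl : y = L)
  rw [Gfun_power_branch_at_eq hβ hL, Gfun_affine_branch_eq hL]

lemma Hfun_of_le (hβ : 1 ≤ β) (hx : 0 ≤ x) (hxL : x ≤ L) :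
    Hfun β L x = β ^ 2 / (2 * β * (2 * β - 1)) * x ^ (2 * β) := by
  have hG : Set.EqOn (Gfun β L) (fun y => β ^ 2 / (2 * β - 1) * y ^ (2 * β - 1))
      (Set.uIcc 0 x) := by
    intro y hy
    rw [Set.uIcc_of_le hx] at hy
    simp [Gfun, hy.2.trans hxL]
  rw [Hfun, intervalIntegral.integral_congr hG, intervalIntegral.integral_const_mul,
    integral_rpow (Or.inl (by linarith)), sub_add_cancel, zero_rpow (by linarith)]
  field_simp
  ring

lemma Hfun_of_ge (hβ : 1 ≤ β) (hL : 0 < L) (hx : L ≤ x) :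
    Hfun β L x = β ^ 2 * (L ^ (β - 1)) ^ 2 * (L ^ 2 / (2 * β * (2 * β - 1))
      + (x ^ 2 - L ^ 2) / 2 - 2 * (β - 1) / (2 * β - 1) * L * (x - L)) := by
  have hG : Set.EqOn (Gfun β L)
      (fun y => β ^ 2 * (L ^ (β - 1)) ^ 2 * (y - 2 * (β - 1) / (2 * β - 1) * L))
      (Set.uIcc L x) := by
    intro y hy
    rw [Set.uIcc_of_le hx] at hy
    exact Gfun_of_ge hβ hL hy.1
  have hpow : L ^ (2 * β) = (L ^ (β - 1)) ^ 2 * L ^ 2 := by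
    rw [rpow_two_mul_eq_sq hL.le, ← rpow_sub_one_mul_self hL.ne']
    ring
  have hint := continuous_Gfun hβ hL
  rw [Hfun, ← intervalIntegral.integral_add_adjacent_intervals (hint.intervalIntegrable 0 L)
    (hint.intervalIntegrable L x), ← Hfun, Hfun_of_le hβ hL.le le_rfl, hpow,
    intervalIntegral.integral_congr hG]
  simp only [intervalIntegral.integral_const_mul, intervalIntegral.intervalIntegrable_id,
    intervalIntegrable_const, intervalIntegral.integral_sub, integral_id,
    intervalIntegral.integral_const, smul_eq_mul]
  ring

variable {n : ℝ}

lemma Hfun_Gfun_phi_combination_nonpos_of_le (hn : 0 ≤ n) (hβ : 1 ≤ β)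
    (hx : 0 ≤ x) (hxL : x ≤ L) :
    n / 2 * Hfun β L x - x * Gfun β L x - (n - 2) / 4 * phi β L x ^ 2 ≤ 0 := by
  have hβ' : 0 < 2 * β - 1 := by linarith
  have hG : x * Gfun β L x = β ^ 2 / (2 * β - 1) * x ^ (2 * β) := by
    have hpow : x * x ^ (2 * β - 1) = x ^ (2 * β) := by
      rw [← rpow_one_add' hx (by linarith), add_sub_cancel]
    rw [Gfun, if_pos hxL, ← hpow]
    ring
  have hphi : phi β L x ^ 2 = x ^ (2 * β) := by rw [phi, if_pos hxL, rpow_two_mul_eq_sq hx]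
  have hdefect : n / 2 * (β ^ 2 / (2 * β * (2 * β - 1)) * x ^ (2 * β))
      - β ^ 2 / (2 * β - 1) * x ^ (2 * β) - (n - 2) / 4 * x ^ (2 * β)
      = -(n * (β - 1) + (2 * β - 1) ^ 2 + 1) / (4 * (2 * β - 1)) * x ^ (2 * β) := by
    field_simp
    ring
  rw [Hfun_of_le hβ hx hxL, hG, hphi, hdefect]
  refine mul_nonpos_of_nonpos_of_nonneg (div_nonpos_of_nonpos_of_nonneg ?_ ?_) (rpow_nonneg hx _)
  · nlinarith
  · linarith

lemma Hfun_Gfun_phi_combination_nonpos_of_ge (hn : 0 ≤ n) (hβ : 1 ≤ β)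
    (hL : 0 < L) (hx : L ≤ x) :
    n / 2 * Hfun β L x - x * Gfun β L x - (n - 2) / 4 * phi β L x ^ 2 ≤ 0 := by
  have hβ' : 0 < 2 * β - 1 := by linarith
  have hκ : 0 ≤ n * (β - 1) + (2 * β - 1) ^ 2 + 1 := by nlinarith
  rw [Hfun_of_ge hβ hL hx, Gfun_of_ge hβ hL hx, phi_of_ge hL hx]
  set v := L ^ (β - 1)
  set κ := n * (β - 1) + (2 * β - 1) ^ 2 + 1
  have hdefect : n / 2 * (β ^ 2 * v ^ 2 * (L ^ 2 / (2 * β * (2 * β - 1))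
      + (x ^ 2 - L ^ 2) / 2 - 2 * (β - 1) / (2 * β - 1) * L * (x - L)))
      - x * (β ^ 2 * v ^ 2 * (x - 2 * (β - 1) / (2 * β - 1) * L))
      - (n - 2) / 4 * (v * (β * (x - L) + L)) ^ 2
      = -(v ^ 2 * (2 * (2 * β - 1) * β ^ 2 * (x - L) ^ 2 + 2 * L * β * κ * (x - L)
          + L ^ 2 * κ)) / (4 * (2 * β - 1)) := by
    field_simp
    ring
  rw [hdefect]
  refine div_nonpos_of_nonpos_of_nonneg (neg_nonpos.mpr ?_) (by linarith)
  have ht : 0 ≤ x - L := by linarith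
  positivity

end

theorem stmt1_general (n : ℕ) (β L : ℝ) (hβ : 1 ≤ β) (hL : 0 < L)
    (x : ℝ) (hx : 0 ≤ x) :
    (n/2 : ℝ) * Hfun β L x - x * Gfun β L x - ((n:ℝ)-2)/4 * (phi β L x)^2 ≤ 0 := by
  rcases le_total x L with hxL | hLx
  · exact Hfun_Gfun_phi_combination_nonpos_of_le n.cast_nonneg hβ hx hxL
  · exact Hfun_Gfun_phi_combination_nonpos_of_ge n.cast_nonneg hβ hL hLx

theorem stmt1 (n : ℕ) (hn : 3 ≤ n) (β L : ℝ) (hβ : 1 ≤ β) (hL : 0 < L)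
    (x : ℝ) (hx : 0 ≤ x) :
    (n/2 : ℝ) * Hfun β L x - x * Gfun β L x - ((n:ℝ)-2)/4 * (phi β L x)^2 ≤ 0 :=
  stmt1_general n β L hβ hL x hx
end

section
/- Let n ≥ 4, β ≥ 1, L > 0. Define f_{β,L}(x) = βx^{2β} for x ≤ L and f_{β,L}(x) = nβ²L^{2β−1}x for x > L. Then x·G_{β,L}(x) − (n/2)·H_{β,L}(x) ≤ f_{β,L}(x) for all x ≥ 0. -/
/-- The comparison function, linear for large `x`. -/
noncomputable def ffun (n : ℕ) (β L x : ℝ) : ℝ :=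
  if x ≤ L then β * x ^ (2*β) else (n:ℝ) * β^2 * L ^ (2*β-1) * x

/-!
On `[0, L]` we have `H ≥ 0` and `x G(x) = β²/(2β - 1) x^{2β} ≤ β x^{2β}` because `β ≥ 1`.
Beyond `L`, `G(y) = a y - b` with `0 ≤ b ≤ a L`, so `H(x) = H(L) + a (x² - L²)/2 - b (x - L)`;
for `n ≥ 4` the quadratic terms combine to `a x² (1 - n/4) ≤ 0`, and what is left is linear in
`x` with slope at most `(3/4) n a L`.
-/

lemma mul_affine_sub_integral_le {n a b c L x : ℝ} (hn : 4 ≤ n) (hL : 0 < L) (hLx : L < x)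
    (hb : 0 ≤ b) (hba : b ≤ a * L) (hc : 0 ≤ c) :
    x * (a * x - b) - n / 2 * (c + (a * (x ^ 2 - L ^ 2) / 2 - b * (x - L))) ≤ n * (a * L) * x := by
  have ha : 0 ≤ a := nonneg_of_mul_nonneg_left (hb.trans hba) hL
  have hx : 0 < x := hL.trans hLx
  have hn0 : 0 ≤ n := by linarith
  nlinarith [mul_nonneg (mul_nonneg ha hx.le) (mul_nonneg (sub_nonneg.2 hLx.le) (sub_nonneg.2 hn)),
    mul_nonneg (mul_nonneg (sub_nonneg.2 hba) hx.le) (sub_nonneg.2 hn),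
    mul_nonneg (mul_nonneg hn0 ha) (mul_nonneg hL.le hx.le),
    mul_nonneg (mul_nonneg hn0 hb) hL.le, mul_nonneg hn0 hc]

lemma rpow_two_mul_pred_mul_self {β L : ℝ} (hL : 0 < L) :
    L ^ (2 * (β - 1)) * L = L ^ (2 * β - 1) := by
  rw [← Real.rpow_add_one hL.ne']
  ring_nf

namespace Gfun

variable {β L x : ℝ}

lemma of_le (h : x ≤ L) : Gfun β L x = β ^ 2 / (2 * β - 1) * x ^ (2 * β - 1) := if_pos h

lemma of_lt (h : L < x) :
    Gfun β L x =
      β ^ 2 * L ^ (2 * (β - 1)) * x - 2 * β ^ 2 * L ^ (2 * β - 1) * (β - 1) / (2 * β - 1) :=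
  if_neg h.not_ge

lemma continuous (hβ : 1 ≤ β) (hL : 0 < L) : Continuous (Gfun β L) := by
  refine Continuous.if_le (continuous_const.mul (Real.continuous_rpow_const (by linarith)))
    ((continuous_const.mul continuous_id).sub continuous_const) continuous_id continuous_const ?_
  rintro y rfl
  rw [mul_assoc (β ^ 2), rpow_two_mul_pred_mul_self hL, div_mul_eq_mul_div, eq_sub_iff_add_eq,
    ← add_div, div_eq_iff (by linarith)]
  ring

end Gfun

namespace Hfun

variable {β L x : ℝ}

lemma of_le (hβ : 1 ≤ β) (hx : 0 ≤ x) (hxL : x ≤ L) :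
    Hfun β L x = β / (2 * (2 * β - 1)) * x ^ (2 * β) := by
  have hβ0 : 2 * β ≠ 0 := by linarith
  rw [Hfun, intervalIntegral.integral_congr (g := fun y => β ^ 2 / (2 * β - 1) * y ^ (2 * β - 1))
    fun y hy => Gfun.of_le ((Set.uIcc_of_le hx ▸ hy).2.trans hxL),
    intervalIntegral.integral_const_mul, integral_rpow (Or.inl (by linarith)),
    sub_add_cancel, Real.zero_rpow hβ0]
  field_simp
  ring

lemma of_lt (hβ : 1 ≤ β) (hL : 0 < L) (hxL : L < x) :
    Hfun β L x = Hfun β L L + (β ^ 2 * L ^ (2 * (β - 1)) * (x ^ 2 - L ^ 2) / 2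
      - 2 * β ^ 2 * L ^ (2 * β - 1) * (β - 1) / (2 * β - 1) * (x - L)) := by
  have hc := Gfun.continuous hβ hL
  rw [Hfun, Hfun, ← intervalIntegral.integral_add_adjacent_intervals
    (hc.intervalIntegrable 0 L) (hc.intervalIntegrable L x)]
  congr 1
  rw [intervalIntegral.integral_congr_ae (g := fun y =>
      β ^ 2 * L ^ (2 * (β - 1)) * y - 2 * β ^ 2 * L ^ (2 * β - 1) * (β - 1) / (2 * β - 1))
      (.of_forall fun y hy => Gfun.of_lt (Set.uIoc_of_le hxL.le ▸ hy).1),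
    intervalIntegral.integral_sub (intervalIntegral.intervalIntegrable_id.const_mul _)
      intervalIntegrable_const, intervalIntegral.integral_const_mul, integral_id,
    intervalIntegral.integral_const, smul_eq_mul]
  ring

end Hfun

lemma mul_Gfun_sub_Hfun_le_of_le {n β L x : ℝ} (hn : 0 ≤ n) (hβ : 1 ≤ β) (hx : 0 ≤ x)
    (hxL : x ≤ L) : x * Gfun β L x - n / 2 * Hfun β L x ≤ β * x ^ (2 * β) := by
  have hβ' : 0 < 2 * β - 1 := by linarith
  have hpow : x * x ^ (2 * β - 1) = x ^ (2 * β) := by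
    rw [mul_comm, ← Real.rpow_add_one' hx (by linarith)]
    ring_nf
  have hcoef : β ^ 2 / (2 * β - 1) ≤ β := by
    rw [div_le_iff₀ hβ']
    nlinarith
  have hH : 0 ≤ n / 2 * (β / (2 * (2 * β - 1)) * x ^ (2 * β)) := by positivity
  rw [Gfun.of_le hxL, Hfun.of_le hβ hx hxL, mul_left_comm, hpow]
  nlinarith [mul_le_mul_of_nonneg_right hcoef (Real.rpow_nonneg hx (2 * β))]

lemma mul_Gfun_sub_Hfun_le_of_lt {n β L x : ℝ} (hn : 4 ≤ n) (hβ : 1 ≤ β) (hL : 0 < L)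
    (hxL : L < x) :
    x * Gfun β L x - n / 2 * Hfun β L x ≤ n * β ^ 2 * L ^ (2 * β - 1) * x := by
  have hβ' : 0 < 2 * β - 1 := by linarith
  have hP : 0 < L ^ (2 * β - 1) := Real.rpow_pos_of_pos hL _
  have hb : 0 ≤ 2 * β ^ 2 * L ^ (2 * β - 1) * (β - 1) / (2 * β - 1) :=
    div_nonneg (mul_nonneg (by positivity) (sub_nonneg.2 hβ)) hβ'.le
  have hba : 2 * β ^ 2 * L ^ (2 * β - 1) * (β - 1) / (2 * β - 1)
      ≤ β ^ 2 * L ^ (2 * (β - 1)) * L := by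
    rw [mul_assoc (β ^ 2), rpow_two_mul_pred_mul_self hL, div_le_iff₀ hβ']
    nlinarith [mul_pos (pow_pos (by linarith : 0 < β) 2) hP]
  have hc : 0 ≤ β / (2 * (2 * β - 1)) * L ^ (2 * β) :=
    mul_nonneg (div_nonneg (by linarith) (by linarith)) (Real.rpow_nonneg hL.le _)
  rw [Gfun.of_lt hxL, Hfun.of_lt hβ hL hxL, Hfun.of_le hβ hL.le le_rfl]
  refine (mul_affine_sub_integral_le hn hL hxL hb hba hc).trans_eq ?_
  rw [mul_assoc (β ^ 2), rpow_two_mul_pred_mul_self hL]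
  ring

theorem stmt6 (n : ℕ) (hn : 4 ≤ n) (β L : ℝ) (hβ : 1 ≤ β) (hL : 0 < L)
    (x : ℝ) (hx : 0 ≤ x) :
    x * Gfun β L x - (n/2 : ℝ) * Hfun β L x ≤ ffun n β L x := by
  have hn' : (4 : ℝ) ≤ n := by exact_mod_cast hn
  rcases le_or_gt x L with hxL | hxL
  · rw [ffun, if_pos hxL]
    exact mul_Gfun_sub_Hfun_le_of_le (by linarith) hβ hx hxL
  · rw [ffun, if_neg hxL.not_ge]
    exact mul_Gfun_sub_Hfun_le_of_lt hn' hβ hL hxL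
end
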